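/- arXiv:2505.02552 — 6 statements merged into one kernel-verified Lean document; each statement's English description precedes it below -/
import Mathlib

section
/- Let (P,≤,0,1) be a bounded poset satisfying the ACC and the DCC, and for subsets A,B ⊆ P define A ⊔ B := Min(U(A ∪ B)) and A ⊓ B := Max(L(A ∪ B)), identifying an element x with the singleton {x}. Then for all x,y,z ∈ P: (i) x ⊔ x = {x} and x ⊓ x = {x}; (ii) x ⊔ y = y ⊔ x and x ⊓ y = y ⊓ x; (iii) 0 ⊔ x = {x} and x ⊓ 1 = {x}; (iv) x ⊔ ((x ⊔ y) ⊔ z) = 0 ⊔ ((x ⊔ y) ⊔ z) and x ⊓ ((x ⊓ y) ⊓ z) = ((x ⊓ y) ⊓ z) ⊓ 1; (v) (x ⊓ y) ⊔ y = {y} and x ⊓ (x ⊔ y) = {x}; (vi) z ∈ x ⊔ y if and only if x ⊔ z = y ⊔ z = {z} and for every u ∈ P, x ⊔ u = y ⊔ u = u ⊓ z = {u} implies u = z, and z ∈ x ⊓ y if and only if z ⊓ x = z ⊓ y = {z} and for every u ∈ P, u ⊓ x = u ⊓ y = z ⊔ u = {u} implies u = z. -/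
/-- Lower bounds of a set in a preorder. -/
def LB {P : Type*} [Preorder P] (A : Set P) : Set P := {x | ∀ a ∈ A, x ≤ a}

/-- Upper bounds of a set in a preorder. -/
def UB {P : Type*} [Preorder P] (A : Set P) : Set P := {x | ∀ a ∈ A, a ≤ x}

/-- The set of maximal elements of a set. -/
def MaxS {P : Type*} [Preorder P] (A : Set P) : Set P :=
  {x | x ∈ A ∧ ∀ y ∈ A, x ≤ y → y = x}

/-- The set of minimal elements of a set. -/
def MinS {P : Type*} [Preorder P] (A : Set P) : Set P :=
  {x | x ∈ A ∧ ∀ y ∈ A, y ≤ x → y = x}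

/-- The operator A ⊔ B := Min U(A ∪ B). -/
def osup {P : Type*} [Preorder P] (A B : Set P) : Set P := MinS (UB (A ∪ B))

/-- The operator A ⊓ B := Max L(A ∪ B). -/
def oinf {P : Type*} [Preorder P] (A B : Set P) : Set P := MaxS (LB (A ∪ B))

/-!
For singletons, `osup {a} {b} = {b}` just says `a ≤ b`, and `z ∈ osup {x} {y}` says that `z` is a
minimal upper bound of `x` and `y`; in these terms (i), (iii) and (vi) are order-theoretic
tautologies, and (v) holds because every element of `oinf A {y}` lies below `y`. For (iv), the DCC
and the top element make `x ⊔ y` and `(x ⊔ y) ⊔ z` nonempty, so some element of `(x ⊔ y) ⊔ z` lies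
above `x`; then `x`, like `0`, adds no constraint to the upper bounds of `(x ⊔ y) ⊔ z`.
Every statement about `oinf` is the statement about `osup` in `Pᵒᵈ`, where it holds definitionally.
-/

section WellFounded

variable {α : Type*} [Preorder α]

theorem wellFoundedLT_of_forall_not_strictAnti (h : ∀ f : ℕ → α, ¬ StrictAnti f) :
    WellFoundedLT α := by
  rw [WellFoundedLT, isWellFounded_iff, RelEmbedding.wellFounded_iff_isEmpty]
  exact ⟨fun a => h a fun _ _ hmn => a.map_rel_iff.2 hmn⟩

theorem wellFoundedGT_of_forall_not_strictMono (h : ∀ f : ℕ → α, ¬ StrictMono f) :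
    WellFoundedGT α :=
  wellFoundedLT_of_forall_not_strictAnti (α := αᵒᵈ) h

end WellFounded

section Preorder

variable {P : Type*} [Preorder P]

theorem osup_comm (A B : Set P) : osup A B = osup B A := by
  rw [osup, osup, Set.union_comm]

theorem oinf_comm (A B : Set P) : oinf A B = oinf B A := by
  rw [oinf, oinf, Set.union_comm]

theorem mem_osup_singleton_singleton {x y z : P} :
    z ∈ osup {x} {y} ↔ x ≤ z ∧ y ≤ z ∧ ∀ u, x ≤ u → y ≤ u → u ≤ z → u = z := by
  simp only [osup, MinS, UB, Set.mem_ofPred_eq, Set.union_singleton, Set.forall_mem_insert,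
    Set.mem_singleton_iff, forall_eq, and_imp]
  tauto

theorem mem_oinf_singleton_singleton {x y z : P} :
    z ∈ oinf {x} {y} ↔ z ≤ x ∧ z ≤ y ∧ ∀ u, u ≤ x → u ≤ y → z ≤ u → u = z :=
  mem_osup_singleton_singleton (P := Pᵒᵈ)

theorem osup_singleton_left_of_le_mem {S : Set P} {x s : P} (hs : s ∈ S) (hx : x ≤ s) :
    osup {x} S = MinS (UB S) := by
  rw [osup, Set.singleton_union]
  congr 1
  ext u
  simp only [UB, Set.mem_ofPred_eq, Set.forall_mem_insert, and_iff_right_iff_imp]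
  exact fun hu => hx.trans (hu s hs)

end Preorder

section PartialOrder

variable {P : Type*} [PartialOrder P]

theorem osup_singleton_right_of_forall_le {A : Set P} {y : P} (h : ∀ a ∈ A, a ≤ y) :
    osup A {y} = {y} := by
  have hUB : UB (A ∪ {y}) = Set.Ici y := by
    ext u
    simp only [UB, Set.union_singleton, Set.forall_mem_insert, Set.mem_ofPred_eq, Set.mem_Ici,
      and_iff_left_iff_imp]
    exact fun hyu a ha => (h a ha).trans hyu
  ext m
  simp only [osup, hUB, MinS, Set.mem_Ici, Set.mem_ofPred_eq, Set.mem_singleton_iff]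
  exact ⟨fun ⟨_, hmin⟩ => (hmin y le_rfl ‹_›).symm,
    fun hm => ⟨hm.ge, fun w hw hwm => le_antisymm (hm ▸ hwm) (hm ▸ hw)⟩⟩

theorem osup_singleton_singleton_eq_right_iff {x y : P} : osup {x} {y} = {y} ↔ x ≤ y :=
  ⟨fun h => (mem_osup_singleton_singleton.1 (h ▸ Set.mem_singleton y)).1,
    fun h => osup_singleton_right_of_forall_le fun _ ha => ha ▸ h⟩

theorem oinf_singleton_singleton_eq_left_iff {x y : P} : oinf {x} {y} = {x} ↔ x ≤ y := by
  rw [oinf_comm]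
  exact osup_singleton_singleton_eq_right_iff (P := Pᵒᵈ)

theorem osup_oinf_singleton_right (A : Set P) (y : P) : osup (oinf A {y}) {y} = {y} :=
  osup_singleton_right_of_forall_le fun _ ha => ha.1 y (Or.inr rfl)

theorem oinf_singleton_osup_left (x : P) (B : Set P) : oinf {x} (osup {x} B) = {x} := by
  rw [oinf_comm, osup_comm]
  exact osup_oinf_singleton_right (P := Pᵒᵈ) B x

theorem minS_nonempty [WellFoundedLT P] {S : Set P} (hS : S.Nonempty) : (MinS S).Nonempty := by
  obtain ⟨m, hm⟩ := WellFoundedLT.exists_minimal ‹_› S hS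
  exact ⟨m, hm.1, fun y hy hym => le_antisymm hym (hm.2 hy hym)⟩

theorem osup_nonempty [WellFoundedLT P] [OrderTop P] (A B : Set P) : (osup A B).Nonempty :=
  minS_nonempty ⟨⊤, fun _ _ => le_top⟩

theorem osup_singleton_osup_osup [WellFoundedLT P] [BoundedOrder P] (x : P) (B C : Set P) :
    osup {x} (osup (osup {x} B) C) = osup {⊥} (osup (osup {x} B) C) := by
  obtain ⟨t, ht⟩ := osup_nonempty {x} B
  obtain ⟨s, hs⟩ := osup_nonempty (osup {x} B) C
  have hxs : x ≤ s := (ht.1 x (Or.inl rfl)).trans (hs.1 t (Or.inl ht))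
  rw [osup_singleton_left_of_le_mem hs hxs, osup_singleton_left_of_le_mem hs bot_le]

theorem oinf_singleton_oinf_oinf [WellFoundedGT P] [BoundedOrder P] (x : P) (B C : Set P) :
    oinf {x} (oinf (oinf {x} B) C) = oinf (oinf (oinf {x} B) C) {⊤} := by
  rw [oinf_comm _ {⊤}]
  exact osup_singleton_osup_osup (P := Pᵒᵈ) x B C

end PartialOrder

theorem stmt_4 {P : Type*} [PartialOrder P] [BoundedOrder P]
    (hACC : ∀ f : ℕ → P, ¬ StrictMono f)
    (hDCC : ∀ f : ℕ → P, ¬ StrictAnti f) :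
    (∀ x : P, osup {x} {x} = {x} ∧ oinf {x} {x} = {x}) ∧
    (∀ x y : P, osup {x} {y} = osup {y} {x} ∧ oinf {x} {y} = oinf {y} {x}) ∧
    (∀ x : P, osup {(⊥ : P)} {x} = {x} ∧ oinf {x} {(⊤ : P)} = {x}) ∧
    (∀ x y z : P,
      osup {x} (osup (osup {x} {y}) {z}) = osup {(⊥ : P)} (osup (osup {x} {y}) {z}) ∧
      oinf {x} (oinf (oinf {x} {y}) {z}) = oinf (oinf (oinf {x} {y}) {z}) {(⊤ : P)}) ∧
    (∀ x y : P, osup (oinf {x} {y}) {y} = {y} ∧ oinf {x} (osup {x} {y}) = {x}) ∧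
    (∀ x y z : P,
      (z ∈ osup {x} {y} ↔
        (osup {x} {z} = {z} ∧ osup {y} {z} = {z} ∧
          ∀ u : P, (osup {x} {u} = {u} ∧ osup {y} {u} = {u} ∧ oinf {u} {z} = {u}) → u = z)) ∧
      (z ∈ oinf {x} {y} ↔
        (oinf {z} {x} = {z} ∧ oinf {z} {y} = {z} ∧
          ∀ u : P, (oinf {u} {x} = {u} ∧ oinf {u} {y} = {u} ∧ osup {z} {u} = {u}) → u = z))) := by
  have := wellFoundedLT_of_forall_not_strictAnti hDCC
  have := wellFoundedGT_of_forall_not_strictMono hACC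
  simp only [osup_singleton_singleton_eq_right_iff, oinf_singleton_singleton_eq_left_iff,
    mem_osup_singleton_singleton, mem_oinf_singleton_singleton, and_imp]
  exact ⟨fun _ => ⟨le_rfl, le_rfl⟩, fun _ _ => ⟨osup_comm _ _, oinf_comm _ _⟩,
    fun _ => ⟨bot_le, le_top⟩,
    fun x y z => ⟨osup_singleton_osup_osup x {y} {z}, oinf_singleton_oinf_oinf x {y} {z}⟩,
    fun x y => ⟨osup_oinf_singleton_right {x} y, oinf_singleton_osup_left x {y}⟩,
    fun _ _ _ => ⟨trivial, trivial⟩⟩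
end

section
/- Let P be a set with 0,1 ∈ P and let ⊔ and ⊓ be operators assigning to each pair of subsets of P a subset of P, identifying an element x with the singleton {x}, such that for all x,y,z ∈ P: (i) x ⊔ x = {x} and x ⊓ x = {x}; (ii) x ⊔ y = y ⊔ x and x ⊓ y = y ⊓ x; (iii) 0 ⊔ x = {x} and x ⊓ 1 = {x}; (iv) x ⊔ ((x ⊔ y) ⊔ z) = 0 ⊔ ((x ⊔ y) ⊔ z) and x ⊓ ((x ⊓ y) ⊓ z) = ((x ⊓ y) ⊓ z) ⊓ 1; (v) (x ⊓ y) ⊔ y = {y} and x ⊓ (x ⊔ y) = {x}; (vi) z ∈ x ⊔ y iff x ⊔ z = y ⊔ z = {z} and for every u ∈ P, x ⊔ u = y ⊔ u = u ⊓ z = {u} implies u = z, and z ∈ x ⊓ y iff z ⊓ x = z ⊓ y = {z} and for every u ∈ P, u ⊓ x = u ⊓ y = z ⊔ u = {u} implies u = z. Define x ≤ y iff x ⊔ y = {y}. Then ≤ is a partial order on P with least element 0 and greatest element 1, and for all x,y ∈ P: (a) x ≤ y iff x ⊓ y = {x}; (b) x ⊔ y = Min(U({x,y})); (c) x ⊓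 y = Max(L({x,y})). -/
/-- Lower bounds of a set with respect to a relation. -/
def LBr {P : Type*} (r : P → P → Prop) (A : Set P) : Set P := {x | ∀ a ∈ A, r x a}

/-- Upper bounds of a set with respect to a relation. -/
def UBr {P : Type*} (r : P → P → Prop) (A : Set P) : Set P := {x | ∀ a ∈ A, r a x}

/-- Maximal elements of a set with respect to a relation. -/
def MaxSr {P : Type*} (r : P → P → Prop) (A : Set P) : Set P :=
  {x | x ∈ A ∧ ∀ y ∈ A, r x y → y = x}

/-- Minimal elements of a set with respect to a relation. -/
def MinSr {P : Type*} (r : P → P → Prop) (A : Set P) : Set P :=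
  {x | x ∈ A ∧ ∀ y ∈ A, r y x → y = x}

/-
Everything is read off the axioms once `≤` is known to be expressible through `⊓` as well:
by absorption (v), `x ⊔ y = {y}` turns `x ⊓ (x ⊔ y) = {x}` into `x ⊓ y = {x}` and conversely.
Transitivity is (iv) with `x ⊔ y = {y}`, `y ⊔ z = {z}` substituted, and (vi) is, after translating
its equations into `≤`, literally the description of minimal upper and maximal lower bounds.
-/

section PairBounds

variable {P : Type*} (r : P → P → Prop) (x y z : P)

theorem mem_MinSr_UBr_pair_iff :
    z ∈ MinSr r (UBr r {x, y}) ↔ r x z ∧ r y z ∧ ∀ u, r x u ∧ r y u ∧ r u z → u = z := by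
  simp only [MinSr, UBr, Set.mem_ofPred_eq, Set.mem_insert_iff, Set.mem_singleton_iff,
    forall_eq_or_imp, forall_eq]
  exact ⟨fun ⟨⟨hx, hy⟩, hmin⟩ => ⟨hx, hy, fun u ⟨hxu, hyu, huz⟩ => hmin u ⟨hxu, hyu⟩ huz⟩,
    fun ⟨hx, hy, hmin⟩ => ⟨⟨hx, hy⟩, fun u ⟨hxu, hyu⟩ huz => hmin u ⟨hxu, hyu, huz⟩⟩⟩

theorem mem_MaxSr_LBr_pair_iff :
    z ∈ MaxSr r (LBr r {x, y}) ↔ r z x ∧ r z y ∧ ∀ u, r u x ∧ r u y ∧ r z u → u = z :=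
  mem_MinSr_UBr_pair_iff (flip r) x y z

end PairBounds

theorem stmt_5 {P : Type*} (osup oinf : Set P → Set P → Set P) (z0 z1 : P)
    (h_i : ∀ x : P, osup {x} {x} = {x} ∧ oinf {x} {x} = {x})
    (h_ii : ∀ x y : P, osup {x} {y} = osup {y} {x} ∧ oinf {x} {y} = oinf {y} {x})
    (h_iii : ∀ x : P, osup {z0} {x} = {x} ∧ oinf {x} {z1} = {x})
    (h_iv : ∀ x y z : P,
      osup {x} (osup (osup {x} {y}) {z}) = osup {z0} (osup (osup {x} {y}) {z}) ∧
      oinf {x} (oinf (oinf {x} {y}) {z}) = oinf (oinf (oinf {x} {y}) {z}) {z1})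
    (h_v : ∀ x y : P, osup (oinf {x} {y}) {y} = {y} ∧ oinf {x} (osup {x} {y}) = {x})
    (h_vi : ∀ x y z : P,
      (z ∈ osup {x} {y} ↔
        (osup {x} {z} = {z} ∧ osup {y} {z} = {z} ∧
          ∀ u : P, (osup {x} {u} = {u} ∧ osup {y} {u} = {u} ∧ oinf {u} {z} = {u}) → u = z)) ∧
      (z ∈ oinf {x} {y} ↔
        (oinf {z} {x} = {z} ∧ oinf {z} {y} = {z} ∧
          ∀ u : P, (oinf {u} {x} = {u} ∧ oinf {u} {y} = {u} ∧ osup {z} {u} = {u}) → u = z)))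
    (le : P → P → Prop) (hle : ∀ x y : P, le x y ↔ osup {x} {y} = {y}) :
    (∀ x : P, le x x) ∧
    (∀ x y : P, le x y → le y x → x = y) ∧
    (∀ x y z : P, le x y → le y z → le x z) ∧
    (∀ x : P, le z0 x) ∧
    (∀ x : P, le x z1) ∧
    (∀ x y : P, le x y ↔ oinf {x} {y} = {x}) ∧
    (∀ x y : P, osup {x} {y} = MinSr le (UBr le {x, y})) ∧
    (∀ x y : P, oinf {x} {y} = MaxSr le (LBr le {x, y})) := by
  have hle_inf : ∀ x y, le x y ↔ oinf {x} {y} = {x} := fun x y => by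
    rw [hle]
    refine ⟨fun h => ?_, fun h => ?_⟩
    · simpa only [h] using (h_v x y).2
    · simpa only [h] using (h_v x y).1
  refine ⟨fun x => (hle x x).2 (h_i x).1, fun x y hxy hyx => ?_, fun x y z hxy hyz => ?_,
    fun x => (hle z0 x).2 (h_iii x).1, fun x => (hle_inf x z1).2 (h_iii x).2, hle_inf,
    fun x y => ?_, fun x y => ?_⟩
  · have h := (h_ii x y).1
    rw [(hle x y).1 hxy, (hle y x).1 hyx] at h
    exact Set.singleton_eq_singleton_iff.1 h.symm
  · have h := (h_iv x y z).1
    rw [(hle x y).1 hxy, (hle y z).1 hyz, (h_iii z).1] at h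
    exact (hle x z).2 h
  · ext z
    rw [(h_vi x y z).1, mem_MinSr_UBr_pair_iff]
    simp only [← hle, ← hle_inf]
  · ext z
    rw [(h_vi x y z).2, mem_MaxSr_LBr_pair_iff]
    simp only [← hle, ← hle_inf]
end

section
/- Let P be a finite set with 0,1 ∈ P and let ⊔ and ⊓ be operators assigning to each pair of subsets of P a subset of P, identifying an element x with the singleton {x}, satisfying for all x,y,z ∈ P: (i) x ⊔ x = {x} and x ⊓ x = {x}; (ii) x ⊔ y = y ⊔ x and x ⊓ y = y ⊓ x; (iii) 0 ⊔ x = {x} and x ⊓ 1 = {x}; (iv) x ⊔ ((x ⊔ y) ⊔ z) = 0 ⊔ ((x ⊔ y) ⊔ z) and x ⊓ ((x ⊓ y) ⊓ z) = ((x ⊓ y) ⊓ z) ⊓ 1; (v) (x ⊓ y) ⊔ y = {y} and x ⊓ (x ⊔ y) = {x}; (vi) z ∈ x ⊔ y iff x ⊔ z = y ⊔ z = {z} and for every u ∈ P, x ⊔ u = y ⊔ u = u ⊓ z = {u} implies u = z, and z ∈ x ⊓ y iff z ⊓ x = z ⊓ y = {z} and for every u ∈ P, u ⊓ x = u ⊓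 y = z ⊔ u = {u} implies u = z. Define x ≤ y iff x ⊔ y = {y}. Then for all x,y ∈ P, Min(U({x,y})) = x ⊔ y and Max(L({x,y})) = x ⊓ y, where U, L, Min, Max are taken with respect to ≤. -/
section PairBounds

variable {P : Type*} (r : P → P → Prop) {x y : P}

theorem mem_UBr_pair {z : P} : z ∈ UBr r {x, y} ↔ r x z ∧ r y z := by
  simp [UBr]

theorem mem_LBr_pair {z : P} : z ∈ LBr r {x, y} ↔ r z x ∧ r z y := by
  simp [LBr]

theorem minSr_UBr_pair_eq {S : Set P}
    (hS : ∀ z, z ∈ S ↔ r x z ∧ r y z ∧ ∀ u, r x u ∧ r y u ∧ r u z → u = z) :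
    MinSr r (UBr r {x, y}) = S := by
  ext z
  simp only [MinSr, Set.mem_ofPred_eq, mem_UBr_pair, hS]
  constructor
  · rintro ⟨⟨hxz, hyz⟩, hmin⟩
    exact ⟨hxz, hyz, fun u ⟨hxu, hyu, huz⟩ => hmin u ⟨hxu, hyu⟩ huz⟩
  · rintro ⟨hxz, hyz, hmin⟩
    exact ⟨⟨hxz, hyz⟩, fun u ⟨hxu, hyu⟩ huz => hmin u ⟨hxu, hyu, huz⟩⟩

theorem maxSr_LBr_pair_eq {S : Set P}
    (hS : ∀ z, z ∈ S ↔ r z x ∧ r z y ∧ ∀ u, r u x ∧ r u y ∧ r z u → u = z) :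
    MaxSr r (LBr r {x, y}) = S := by
  ext z
  simp only [MaxSr, Set.mem_ofPred_eq, mem_LBr_pair, hS]
  constructor
  · rintro ⟨⟨hzx, hzy⟩, hmax⟩
    exact ⟨hzx, hzy, fun u ⟨hux, huy, hzu⟩ => hmax u ⟨hux, huy⟩ hzu⟩
  · rintro ⟨hzx, hzy, hmax⟩
    exact ⟨⟨hzx, hzy⟩, fun u ⟨hux, huy⟩ hzu => hmax u ⟨hux, huy, hzu⟩⟩

end PairBounds

theorem inf_eq_left_iff_sup_eq_right {P : Type*} (osup oinf : Set P → Set P → Set P)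
    (h_v : ∀ x y : P, osup (oinf {x} {y}) {y} = {y} ∧ oinf {x} (osup {x} {y}) = {x})
    (a b : P) : oinf {a} {b} = {a} ↔ osup {a} {b} = {b} := by
  constructor
  · intro h
    simpa [h] using (h_v a b).1
  · intro h
    simpa [h] using (h_v a b).2

theorem stmt_7_general {P : Type*} (osup oinf : Set P → Set P → Set P)
    (h_v : ∀ x y : P, osup (oinf {x} {y}) {y} = {y} ∧ oinf {x} (osup {x} {y}) = {x})
    (h_vi : ∀ x y z : P,
      (z ∈ osup {x} {y} ↔
        (osup {x} {z} = {z} ∧ osup {y} {z} = {z} ∧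
          ∀ u : P, (osup {x} {u} = {u} ∧ osup {y} {u} = {u} ∧ oinf {u} {z} = {u}) → u = z)) ∧
      (z ∈ oinf {x} {y} ↔
        (oinf {z} {x} = {z} ∧ oinf {z} {y} = {z} ∧
          ∀ u : P, (oinf {u} {x} = {u} ∧ oinf {u} {y} = {u} ∧ osup {z} {u} = {u}) → u = z)))
    (le : P → P → Prop) (hle : ∀ x y : P, le x y ↔ osup {x} {y} = {y}) :
    ∀ x y : P,
      MinSr le (UBr le {x, y}) = osup {x} {y} ∧
      MaxSr le (LBr le {x, y}) = oinf {x} {y} := by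
  have absorb := inf_eq_left_iff_sup_eq_right osup oinf h_v
  intro x y
  constructor
  · refine minSr_UBr_pair_eq le fun z => ?_
    rw [(h_vi x y z).1]
    simp only [hle, absorb]
  · refine maxSr_LBr_pair_eq le fun z => ?_
    rw [(h_vi x y z).2]
    simp only [hle, absorb]

theorem stmt_7 {P : Type*} [Finite P] (osup oinf : Set P → Set P → Set P) (z0 z1 : P)
    (h_i : ∀ x : P, osup {x} {x} = {x} ∧ oinf {x} {x} = {x})
    (h_ii : ∀ x y : P, osup {x} {y} = osup {y} {x} ∧ oinf {x} {y} = oinf {y} {x})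
    (h_iii : ∀ x : P, osup {z0} {x} = {x} ∧ oinf {x} {z1} = {x})
    (h_iv : ∀ x y z : P,
      osup {x} (osup (osup {x} {y}) {z}) = osup {z0} (osup (osup {x} {y}) {z}) ∧
      oinf {x} (oinf (oinf {x} {y}) {z}) = oinf (oinf (oinf {x} {y}) {z}) {z1})
    (h_v : ∀ x y : P, osup (oinf {x} {y}) {y} = {y} ∧ oinf {x} (osup {x} {y}) = {x})
    (h_vi : ∀ x y z : P,
      (z ∈ osup {x} {y} ↔
        (osup {x} {z} = {z} ∧ osup {y} {z} = {z} ∧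
          ∀ u : P, (osup {x} {u} = {u} ∧ osup {y} {u} = {u} ∧ oinf {u} {z} = {u}) → u = z)) ∧
      (z ∈ oinf {x} {y} ↔
        (oinf {z} {x} = {z} ∧ oinf {z} {y} = {z} ∧
          ∀ u : P, (oinf {u} {x} = {u} ∧ oinf {u} {y} = {u} ∧ osup {z} {u} = {u}) → u = z)))
    (le : P → P → Prop) (hle : ∀ x y : P, le x y ↔ osup {x} {y} = {y}) :
    ∀ x y : P,
      MinSr le (UBr le {x, y}) = osup {x} {y} ∧
      MaxSr le (LBr le {x, y}) = oinf {x} {y} :=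
  stmt_7_general osup oinf h_v h_vi le hle
end

section
/- Let (P,≤,',0,1) be a complemented poset. Then for all x,y ∈ P: x + x = {0}, x + y = y + x, x + 0 = {x}, x + 1 = {x'}, and x + x' = {1}. -/
/-- The symmetric difference A + B := Min U(Max L(A' ∪ B) ∪ Max L(A ∪ B')) in a
poset with a complementation map c. -/
def symdiff {P : Type*} [Preorder P] (c : P → P) (A B : Set P) : Set P :=
  MinS (UB (MaxS (LB ((c '' A) ∪ B)) ∪ MaxS (LB (A ∪ (c '' B)))))

section ComplementedPoset

variable {P : Type*}

theorem symdiff_comm [Preorder P] (c : P → P) (A B : Set P) :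
    symdiff c A B = symdiff c B A := by
  rw [symdiff, symdiff, Set.union_comm (c '' A), Set.union_comm A, Set.union_comm]

variable [PartialOrder P]

theorem LB_pair_of_le {a b : P} (h : a ≤ b) : LB {a, b} = Set.Iic a := by
  ext z
  simp only [LB, Set.mem_insert_iff, Set.mem_singleton_iff, forall_eq_or_imp, forall_eq,
    Set.mem_Iic, Set.mem_ofPred_eq, and_iff_left_iff_imp]
  exact fun hz => hz.trans h

theorem UB_pair_of_le {a b : P} (h : a ≤ b) : UB {a, b} = Set.Ici b := by
  ext z
  simp only [UB, Set.mem_insert_iff, Set.mem_singleton_iff, forall_eq_or_imp, forall_eq,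
    Set.mem_Ici, Set.mem_ofPred_eq, and_iff_right_iff_imp]
  exact h.trans

theorem MaxS_Iic (a : P) : MaxS (Set.Iic a) = {a} := by
  ext z
  simp only [MaxS, Set.mem_Iic, Set.mem_ofPred_eq, Set.mem_singleton_iff]
  constructor
  · rintro ⟨hz, hmax⟩
    exact (hmax a le_rfl hz).symm
  · rintro rfl
    exact ⟨le_rfl, fun y hy hzy => le_antisymm hy hzy⟩

theorem MinS_Ici (a : P) : MinS (Set.Ici a) = {a} := by
  ext z
  simp only [MinS, Set.mem_Ici, Set.mem_ofPred_eq, Set.mem_singleton_iff]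
  constructor
  · rintro ⟨hz, hmin⟩
    exact (hmin a le_rfl hz).symm
  · rintro rfl
    exact ⟨le_rfl, fun y hy hzy => le_antisymm hzy hy⟩

theorem symdiff_singleton_eq_of_principal {c : P → P} {x y a b d : P}
    (ha : LB {c x, y} = Set.Iic a) (hb : LB {x, c y} = Set.Iic b)
    (hd : UB {a, b} = Set.Ici d) : symdiff c {x} {y} = {d} := by
  simp only [symdiff, Set.image_singleton, Set.singleton_union]
  rw [ha, hb, MaxS_Iic, MaxS_Iic, Set.singleton_union, hd, MinS_Ici]

variable [BoundedOrder P] {c : P → P}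

theorem compl_bot_eq_top (hcompU : ∀ x : P, UB {x, c x} = {(⊤ : P)}) : c ⊥ = ⊤ := by
  have h := hcompU ⊥
  rwa [UB_pair_of_le bot_le, ← Set.Ici_top, Set.Ici_inj] at h

end ComplementedPoset

theorem stmt_8_general {P : Type*} [PartialOrder P] [BoundedOrder P] (c : P → P)
    (hinv : ∀ x : P, c (c x) = x)
    (hcompL : ∀ x : P, LB {x, c x} = {(⊥ : P)})
    (hcompU : ∀ x : P, UB {x, c x} = {(⊤ : P)}) :
    ∀ x y : P,
      symdiff c {x} {x} = {(⊥ : P)} ∧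
      symdiff c {x} {y} = symdiff c {y} {x} ∧
      symdiff c {x} {(⊥ : P)} = {x} ∧
      symdiff c {x} {(⊤ : P)} = {c x} ∧
      symdiff c {x} {c x} = {(⊤ : P)} := by
  have hc_bot : c ⊥ = ⊤ := compl_bot_eq_top hcompU
  have hc_top : c ⊤ = ⊥ := by rw [← hc_bot, hinv]
  have hLB_compl (x : P) : LB {x, c x} = Set.Iic ⊥ := by rw [hcompL, Set.Iic_bot]
  intro x y
  refine ⟨?_, symdiff_comm c {x} {y}, ?_, ?_, ?_⟩
  · exact symdiff_singleton_eq_of_principal (by rw [Set.pair_comm]; exact hLB_compl x)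
      (hLB_compl x) (UB_pair_of_le le_rfl)
  · exact symdiff_singleton_eq_of_principal
      (by rw [Set.pair_comm]; exact LB_pair_of_le bot_le)
      (by rw [hc_bot]; exact LB_pair_of_le le_top) (UB_pair_of_le bot_le)
  · exact symdiff_singleton_eq_of_principal (LB_pair_of_le le_top)
      (by rw [hc_top, Set.pair_comm]; exact LB_pair_of_le bot_le)
      (by rw [Set.pair_comm]; exact UB_pair_of_le bot_le)
  · exact symdiff_singleton_eq_of_principal (LB_pair_of_le le_rfl)
      (by rw [hinv]; exact LB_pair_of_le le_rfl)
      (by rw [Set.pair_comm, hcompU, Set.Ici_top])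

theorem stmt_8 {P : Type*} [PartialOrder P] [BoundedOrder P] (c : P → P)
    (hanti : ∀ x y : P, x ≤ y → c y ≤ c x)
    (hinv : ∀ x : P, c (c x) = x)
    (hcompL : ∀ x : P, LB {x, c x} = {(⊥ : P)})
    (hcompU : ∀ x : P, UB {x, c x} = {(⊤ : P)}) :
    ∀ x y : P,
      symdiff c {x} {x} = {(⊥ : P)} ∧
      symdiff c {x} {y} = symdiff c {y} {x} ∧
      symdiff c {x} {(⊥ : P)} = {x} ∧
      symdiff c {x} {(⊤ : P)} = {c x} ∧
      symdiff c {x} {c x} = {(⊤ : P)} :=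
  stmt_8_general c hinv hcompL hcompU
end

section
/- Let (P,≤,',0,1) be a Boolean poset satisfying the ACC and the DCC and let a,b ∈ P with a ≤ b. Then a + b = Min(U(Max(L({a',b})))) = Min(U(L({a',b}))). -/
/-
Since `a ≤ b` gives `b' ≤ a'`, the lower bounds of `{a, b'}` are lower bounds of `{a, a'}`,
hence only `0`; so the second half of `a + b` contributes nothing to the upper bounds. The ACC
puts every lower bound of `{a', b}` below a maximal one, so passing to maximal lower bounds does
not change the set of upper bounds either.
-/

section Bounds

variable {P : Type*}

theorem mem_maxS_iff [PartialOrder P] {A : Set P} {x : P} : x ∈ MaxS A ↔ Maximal (· ∈ A) x :=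
  and_congr_right fun _ => forall₂_congr fun _ _ =>
    ⟨fun h hxy => (h hxy).le, fun h hxy => (h hxy).antisymm hxy⟩

theorem maxS_singleton [Preorder P] (x : P) : MaxS {x} = {x} :=
  Set.eq_singleton_iff_unique_mem.2 ⟨⟨rfl, fun _ hy _ => hy⟩, fun _ hy => hy.1⟩

theorem UB_union_singleton_bot [Preorder P] [OrderBot P] (A : Set P) : UB (A ∪ {⊥}) = UB A := by
  change upperBounds _ = upperBounds _
  rw [upperBounds_union, upperBounds_singleton, Set.Ici_bot, Set.inter_univ]

theorem wellFoundedGT_of_forall_not_strictMono_s11 [Preorder P]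
    (hACC : ∀ f : ℕ → P, ¬ StrictMono f) : WellFoundedGT P :=
  ⟨wellFounded_iff_isEmpty_descending_chain.2
    ⟨fun ⟨f, hf⟩ => hACC f (strictMono_nat_of_lt_succ hf)⟩⟩

theorem UB_maxS_of_wellFoundedGT [PartialOrder P] [WellFoundedGT P] (A : Set P) :
    UB (MaxS A) = UB A := by
  refine Set.Subset.antisymm (fun u hu y hy => ?_) fun u hu m hm => hu m hm.1
  obtain ⟨m, hym, hm⟩ := exists_maximal_ge_of_wellFoundedGT (· ∈ A) y hy
  exact hym.trans (hu m (mem_maxS_iff.2 hm))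

theorem LB_pair_eq_singleton_bot_of_le [Preorder P] [OrderBot P] {a x y : P}
    (hx : LB {a, x} = {⊥}) (hyx : y ≤ x) : LB {a, y} = {⊥} := by
  refine Set.eq_singleton_iff_unique_mem.2 ⟨fun _ _ => bot_le, fun z hz => ?_⟩
  have hzx : z ∈ LB {a, x} := by
    rintro w (rfl | rfl)
    · exact hz w (Set.mem_insert w _)
    · exact (hz y (Set.mem_insert_of_mem a rfl)).trans hyx
  rwa [hx] at hzx

end Bounds

theorem stmt_11_general {P : Type*} [PartialOrder P] [BoundedOrder P] (c : P → P)
    (hanti : ∀ x y : P, x ≤ y → c y ≤ c x)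
    (hcompL : ∀ x : P, LB {x, c x} = {(⊥ : P)})
    (hACC : ∀ f : ℕ → P, ¬ StrictMono f)
    (a b : P) (hab : a ≤ b) :
    symdiff c {a} {b} = MinS (UB (MaxS (LB {c a, b}))) ∧
    symdiff c {a} {b} = MinS (UB (LB {c a, b})) := by
  have := wellFoundedGT_of_forall_not_strictMono_s11 hACC
  have hdisj : LB {a, c b} = {⊥} := LB_pair_eq_singleton_bot_of_le (hcompL a) (hanti a b hab)
  have hsymm : symdiff c {a} {b} = MinS (UB (MaxS (LB {c a, b}))) := by
    rw [symdiff, Set.image_singleton, Set.image_singleton, Set.singleton_union,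
      Set.singleton_union, hdisj, maxS_singleton, UB_union_singleton_bot]
  exact ⟨hsymm, by rw [hsymm, UB_maxS_of_wellFoundedGT]⟩

theorem stmt_11 {P : Type*} [PartialOrder P] [BoundedOrder P] (c : P → P)
    (hanti : ∀ x y : P, x ≤ y → c y ≤ c x)
    (hinv : ∀ x : P, c (c x) = x)
    (hcompL : ∀ x : P, LB {x, c x} = {(⊥ : P)})
    (hcompU : ∀ x : P, UB {x, c x} = {(⊤ : P)})
    (hACC : ∀ f : ℕ → P, ¬ StrictMono f)
    (hDCC : ∀ f : ℕ → P, ¬ StrictAnti f)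
    (hdist : ∀ (x y : P) (A : Set P),
      UB (LB {x, y} ∪ A) = UB (LB (UB ({x} ∪ A) ∪ UB ({y} ∪ A))))
    (a b : P) (hab : a ≤ b) :
    symdiff c {a} {b} = MinS (UB (MaxS (LB {c a, b}))) ∧
    symdiff c {a} {b} = MinS (UB (LB {c a, b})) :=
  stmt_11_general c hanti hcompL hACC a b hab
end

section
/- Let (P,≤,',0,1) be a finite Boolean poset. Then for all a,b ∈ P: Max(L({a,b})) = {a} if and only if a ≤ b, and a + 1 = {a'}; hence the Boolean poset obtained from the dual (P,+,·,0,1) (where A·B := Max(L(A ∪ B)) and A+B := Min(U(Max(L(A' ∪ B)) ∪ Max(L(A ∪ B')))), with order a ⊑ b iff a·b = {a} and complementation a ↦ a+1) coincides with (P,≤,',0,1). -/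
/-- The symmetric difference A + B := Min U(Max L(A' ∪ B) ∪ Max L(A ∪ B')). -/
def pplus {P : Type*} [Preorder P] (c : P → P) (A B : Set P) : Set P :=
  MinS (UB (MaxS (LB ((c '' A) ∪ B)) ∪ MaxS (LB (A ∪ (c '' B)))))

/-!
If `a ≤ b`, then `a` is the least element of `{a, b}`, hence its greatest lower bound, hence
the only maximal lower bound. Since `1' = 0` by `L({1, 1'}) = {0}`, the two lower-bound sets in
`a + 1` are `L({a', 1})`, with greatest element `a'`, and `L({a, 0}) = {0}`; the upper bounds of
`{a', 0}` then have least element `a'`.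
-/

section Bounds

variable {P : Type*}

theorem LB_eq_lowerBounds [Preorder P] (A : Set P) : LB A = lowerBounds A := rfl

variable [PartialOrder P] {A : Set P} {a : P}

theorem MaxS_eq_singleton_of_isGreatest (h : IsGreatest A a) : MaxS A = {a} := by
  ext x
  refine ⟨fun hx => (hx.2 a h.1 (h.2 hx.1)).symm, ?_⟩
  rintro rfl
  exact ⟨h.1, fun y hy hxy => le_antisymm (h.2 hy) hxy⟩

theorem MinS_eq_singleton_of_isLeast (h : IsLeast A a) : MinS A = {a} :=
  MaxS_eq_singleton_of_isGreatest (P := Pᵒᵈ) h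

theorem MaxS_LB_eq_singleton_of_isLeast (h : IsLeast A a) : MaxS (LB A) = {a} :=
  MaxS_eq_singleton_of_isGreatest h.isGLB

theorem MinS_UB_eq_singleton_of_isGreatest (h : IsGreatest A a) : MinS (UB A) = {a} :=
  MinS_eq_singleton_of_isLeast h.isLUB

theorem MaxS_LB_pair_eq_singleton_iff {a b : P} : MaxS (LB {a, b}) = {a} ↔ a ≤ b := by
  refine ⟨fun h => ?_, fun hab => MaxS_LB_eq_singleton_of_isLeast ⟨by simp, ?_⟩⟩
  · have ha : a ∈ MaxS (LB {a, b}) := h.symm ▸ rfl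
    exact ha.1 b (by simp)
  · simp [hab]

end Bounds

theorem pplus_singleton_top {P : Type*} [PartialOrder P] [BoundedOrder P] {c : P → P}
    (hc : c ⊤ = ⊥) (a : P) : pplus c {a} {⊤} = {c a} := by
  have hL₁ : MaxS (LB ({c a} ∪ {⊤})) = {c a} :=
    MaxS_LB_eq_singleton_of_isLeast ⟨by simp, by simp⟩
  have hL₂ : MaxS (LB ({a} ∪ {⊥})) = {⊥} :=
    MaxS_LB_eq_singleton_of_isLeast (isLeast_bot_iff.2 (by simp))
  rw [pplus, Set.image_singleton, Set.image_singleton, hc, hL₁, hL₂]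
  exact MinS_UB_eq_singleton_of_isGreatest ⟨by simp, by simp⟩

theorem compl_top_eq_bot_of_LB_pair {P : Type*} [PartialOrder P] [BoundedOrder P] {c : P → P}
    (hcompL : LB {⊤, c ⊤} = {(⊥ : P)}) : c ⊤ = ⊥ := by
  have h : c ⊤ ∈ LB {⊤, c ⊤} := by simp [LB_eq_lowerBounds]
  rwa [hcompL] at h

theorem stmt_17_general {P : Type*} [PartialOrder P] [BoundedOrder P] (c : P → P)
    (hcompL : ∀ x : P, LB {x, c x} = {(⊥ : P)}) :
    ∀ a b : P,
      (MaxS (LB {a, b}) = {a} ↔ a ≤ b) ∧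
      pplus c {a} {(⊤ : P)} = {c a} :=
  fun a _ => ⟨MaxS_LB_pair_eq_singleton_iff,
    pplus_singleton_top (compl_top_eq_bot_of_LB_pair (hcompL ⊤)) a⟩

theorem stmt_17 {P : Type*} [PartialOrder P] [BoundedOrder P] [Finite P] (c : P → P)
    (hanti : ∀ x y : P, x ≤ y → c y ≤ c x)
    (hinv : ∀ x : P, c (c x) = x)
    (hcompL : ∀ x : P, LB {x, c x} = {(⊥ : P)})
    (hcompU : ∀ x : P, UB {x, c x} = {(⊤ : P)})
    (hdist : ∀ x y z : P,
      LB (UB {x, y} ∪ {z}) = LB (UB (LB {x, z} ∪ LB {y, z}))) :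
    ∀ a b : P,
      (MaxS (LB {a, b}) = {a} ↔ a ≤ b) ∧
      pplus c {a} {(⊤ : P)} = {c a} :=
  stmt_17_general c hcompL
end
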